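/- For the truncated optimal caching distribution p*_c(i) = (β/(c·i*))·Σ_{j=1}^{i*} ln(j/i) + 1/i* for i ≤ i* and p*_c(i) = 0 for i > i*, where i* satisfies (β/c)·ln((i*)^{i*}/i*!) < 1, all entries with i ≤ i* are positive and Σ_{i=1}^{N_f} p*_c(i) = 1. -/

import Mathlib

open Real Finset

/-!
With `S i = ∑_{j ≤ i*} log (j / i)` one has `p i = (1 + (β / c) S i) / i*` for `i ≤ i*`.
`S` is decreasing and `S i* = -log ((i*)^{i*} / i*!)`, so the hypothesis gives `(β / c) S i > -1`.
The double sum `∑_i S i` vanishes since `log (j / i)` is antisymmetric in `(i, j)`,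
leaving `∑ p i = i* · (1 / i*) = 1`.
-/

theorem sum_sum_log_div_eq_zero {ι : Type*} (s : Finset ι) (f : ι → ℝ) :
    ∑ i ∈ s, ∑ j ∈ s, log (f j / f i) = 0 := by
  have hswap : ∑ i ∈ s, ∑ j ∈ s, log (f j / f i) = -∑ i ∈ s, ∑ j ∈ s, log (f j / f i) := by
    conv_lhs => rw [sum_comm]
    simp only [← sum_neg_distrib, ← log_inv, inv_div]
  linarith

theorem sum_log_div_le_sum_log_div {ι : Type*} (s : Finset ι) {f : ι → ℝ}
    (hf : ∀ j ∈ s, 0 < f j) {x y : ℝ} (hx : 0 < x) (hxy : x ≤ y) :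
    ∑ j ∈ s, log (f j / y) ≤ ∑ j ∈ s, log (f j / x) := by
  gcongr with j hj
  · exact div_pos (hf j hj) (hx.trans_le hxy)
  · exact (hf j hj).le

theorem prod_Icc_natCast_eq_factorial (n : ℕ) : ∏ j ∈ Icc 1 n, (j : ℝ) = n.factorial := by
  rw [← Ico_add_one_right_eq_Icc, ← Finset.prod_Ico_id_eq_factorial]
  push_cast
  rfl

theorem sum_Icc_log_div_self (n : ℕ) :
    ∑ j ∈ Icc 1 n, log ((j : ℝ) / n) = -log ((n : ℝ) ^ n / n.factorial) := by
  rw [← log_inv, inv_div, ← log_prod]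
  · rw [prod_div_distrib, prod_const, Nat.card_Icc, Nat.add_sub_cancel,
      prod_Icc_natCast_eq_factorial]
  · intro j hj
    obtain ⟨hj1, hjn⟩ := mem_Icc.mp hj
    have : (0 : ℝ) < j := by exact_mod_cast hj1
    have : (0 : ℝ) < n := by exact_mod_cast hj1.trans hjn
    positivity

theorem truncated_caching_valid (N : ℕ) (β c : ℝ) (hβ : 0 < β) (hc : 0 < c)
    (istar : ℕ) (h1 : 1 ≤ istar) (h2 : istar ≤ N)
    (hcond : β / c * Real.log (((istar : ℕ) : ℝ) ^ istar / (Nat.factorial istar)) < 1)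
    (p : ℕ → ℝ)
    (hp : ∀ i, p i = if i ≤ istar then
      β / (c * istar) * (∑ j ∈ Finset.Icc 1 istar, Real.log ((j : ℝ) / i)) + 1 / istar
      else 0) :
    (∀ i ∈ Finset.Icc 1 istar, 0 < p i) ∧ ∑ i ∈ Finset.Icc 1 N, p i = 1 := by
  have hn : (0 : ℝ) < istar := by exact_mod_cast h1
  have hp_Icc : ∀ i ∈ Icc 1 istar,
      p i = (1 + β / c * ∑ j ∈ Icc 1 istar, log ((j : ℝ) / i)) / istar := by
    intro i hi
    rw [hp i, if_pos (mem_Icc.mp hi).2]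
    ring
  constructor
  · intro i hi
    obtain ⟨hi1, hin⟩ := mem_Icc.mp hi
    have hmin : -log ((istar : ℝ) ^ istar / istar.factorial) ≤
        ∑ j ∈ Icc 1 istar, log ((j : ℝ) / i) := by
      rw [← sum_Icc_log_div_self]
      refine sum_log_div_le_sum_log_div _ (fun j hj => ?_) (by exact_mod_cast hi1)
        (by exact_mod_cast hin)
      exact_mod_cast (mem_Icc.mp hj).1
    have hgt : -1 < β / c * ∑ j ∈ Icc 1 istar, log ((j : ℝ) / i) :=
      calc -1 < β / c * -log ((istar : ℝ) ^ istar / istar.factorial) := by linarith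
        _ ≤ _ := mul_le_mul_of_nonneg_left hmin (by positivity)
    rw [hp_Icc i hi]
    exact div_pos (by linarith) hn
  · have hp_zero : ∀ i ∈ Icc 1 N, i ∉ Icc 1 istar → p i = 0 := fun i hi hi' => by
      rw [hp i, if_neg (by simp only [mem_Icc] at hi hi'; omega)]
    have hzero := sum_sum_log_div_eq_zero (Icc 1 istar) (fun k : ℕ => (k : ℝ))
    rw [← sum_subset (Icc_subset_Icc_right h2) hp_zero, sum_congr rfl hp_Icc, ← sum_div,
      sum_add_distrib, ← mul_sum, hzero, mul_zero, add_zero, sum_const, Nat.card_Icc,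
      Nat.add_sub_cancel, nsmul_one, div_self hn.ne']
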